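/- Let A(D) be the disc algebra, the Banach space of continuous functions on the closed unit disc that are holomorphic on the open unit disc D = {z : |z| < 1}, with the supremum norm. Then the set of f ∈ A(D) having infinite difference quotients at every point z₀ of the unit circle 𝕋 = {z : |z| = 1} along 𝕋 is a dense Gδ subset of A(D). -/

import Mathlib

open scoped Classical in
/-- Extend a continuous map on `E` to all of `ℂ` by zero. -/
noncomputable def extendFn (E : Set ℂ) (f : C(E, ℂ)) : ℂ → ℂ :=
  fun z => if h : z ∈ E then f ⟨z, h⟩ else 0

/-- `f` has infinite difference quotients at `z₀` along `J`. -/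
def HasInfDiffQuot (f : ℂ → ℂ) (J : Set ℂ) (z₀ : ℂ) : Prop :=
  ∀ M > (0:ℝ), ∀ δ > (0:ℝ), ∃ z ∈ J,
    0 < ‖z - z₀‖ ∧ ‖z - z₀‖ < δ ∧
      M * ‖z - z₀‖ < ‖f z - f z₀‖

/-!
The set is the countable intersection over `n` of the sets `Gₙ` of functions having, at every
point `z₀` of the circle, a difference quotient larger than `n + 1` at some point of the circle
within `1 / (n + 1)` of `z₀`. By compactness of the circle each `Gₙ` is open, and `A(D)` is
complete, being closed in `C(D̄, ℂ)` by Weierstrass' theorem on uniform limits of holomorphic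
functions; so by Baire it suffices that each `Gₙ` is dense. Given `f ∈ A(D)`, the function
`f + c zᴺ` is `c`-close to `f`. If `N` is so large that `f` oscillates by less than `c` on arcs
of length `π / N`, then rotating `z₀` by the angle `π / N` changes `c zᴺ` by `2c` but `f` by less
than `c`, so the difference quotient there is at least `c N / π`, which is large.
-/

open Metric Set Filter Topology Function

def DiffQuotExceeds (f : ℂ → ℂ) (J : Set ℂ) (M δ : ℝ) (z₀ : ℂ) : Prop :=
  ∃ z ∈ J, 0 < ‖z - z₀‖ ∧ ‖z - z₀‖ < δ ∧ M * ‖z - z₀‖ < ‖f z - f z₀‖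

namespace DiffQuotExceeds

variable {f g : ℂ → ℂ} {J : Set ℂ} {M M' δ δ' : ℝ} {z₀ : ℂ}

theorem mono (h : DiffQuotExceeds f J M δ z₀) (hM : M' ≤ M) (hδ : δ ≤ δ') :
    DiffQuotExceeds f J M' δ' z₀ := by
  obtain ⟨z, hz, hpos, hzδ, hzM⟩ := h
  exact ⟨z, hz, hpos, hzδ.trans_le hδ, (mul_le_mul_of_nonneg_right hM hpos.le).trans_lt hzM⟩

theorem congr (h : DiffQuotExceeds f J M δ z₀) (hfg : EqOn f g J) (hz₀ : z₀ ∈ J) :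
    DiffQuotExceeds g J M δ z₀ := by
  obtain ⟨z, hz, hpos, hzδ, hzM⟩ := h
  exact ⟨z, hz, hpos, hzδ, by rwa [← hfg hz, ← hfg hz₀]⟩

end DiffQuotExceeds

theorem hasInfDiffQuot_iff_forall_nat {f : ℂ → ℂ} {J : Set ℂ} {z₀ : ℂ} :
    HasInfDiffQuot f J z₀ ↔ ∀ n : ℕ, DiffQuotExceeds f J (n + 1) (1 / (n + 1)) z₀ := by
  refine ⟨fun h n => h _ (by positivity) _ (by positivity), fun h M _ δ hδ => ?_⟩
  obtain ⟨n, hn⟩ := exists_nat_one_div_lt hδ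
  obtain ⟨k, hk⟩ := exists_nat_ge M
  refine (h (n + k)).mono ?_ (le_trans ?_ hn.le)
  · push_cast; linarith
  · push_cast; gcongr; linarith

theorem DiffQuotExceeds.eventually_nhdsWithin {X : Type*} [TopologicalSpace X]
    {F : X → ℂ → ℂ} {J : Set ℂ} (hF : ContinuousOn (uncurry F) (univ ×ˢ J)) {M δ : ℝ} {x₀ : X}
    {z₀ : ℂ} (hz₀ : z₀ ∈ J) (h : DiffQuotExceeds (F x₀) J M δ z₀) :
    ∀ᶠ p : X × ℂ in 𝓝[univ ×ˢ J] (x₀, z₀), DiffQuotExceeds (F p.1) J M δ p.2 := by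
  obtain ⟨z, hz, hpos, hzδ, hzM⟩ := h
  have hdist : Tendsto (fun p : X × ℂ => ‖z - p.2‖) (𝓝[univ ×ˢ J] (x₀, z₀)) (𝓝 ‖z - z₀‖) :=
    ((continuous_const.sub continuous_snd).norm.tendsto _).mono_left nhdsWithin_le_nhds
  have hFz : ContinuousWithinAt (fun p : X × ℂ => F p.1 z) (univ ×ˢ J) (x₀, z₀) :=
    ContinuousWithinAt.comp (x := (x₀, z₀)) (f := fun p : X × ℂ => (p.1, z))
      (hF (x₀, z) ⟨trivial, hz⟩) (by fun_prop) fun _ _ => ⟨trivial, hz⟩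
  have hquot : Tendsto (fun p : X × ℂ => ‖F p.1 z - F p.1 p.2‖) (𝓝[univ ×ˢ J] (x₀, z₀))
      (𝓝 ‖F x₀ z - F x₀ z₀‖) :=
    (hFz.sub (hF (x₀, z₀) ⟨trivial, hz₀⟩)).norm
  filter_upwards [hdist.eventually (lt_mem_nhds hpos), hdist.eventually (gt_mem_nhds hzδ),
    (hdist.const_mul M).eventually_lt hquot hzM] with p hp₁ hp₂ hp₃
  exact ⟨z, hz, hp₁, hp₂, hp₃⟩

theorem isOpen_setOf_forall_diffQuotExceeds {X : Type*} [TopologicalSpace X] {F : X → ℂ → ℂ}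
    {J : Set ℂ} (hJ : IsCompact J) (hF : ContinuousOn (uncurry F) (univ ×ˢ J)) (M δ : ℝ) :
    IsOpen {x | ∀ z₀ ∈ J, DiffQuotExceeds (F x) J M δ z₀} := by
  refine isOpen_iff_eventually.2 fun x₀ hx₀ => ?_
  have hlocal (z₀ : ℂ) (hz₀ : z₀ ∈ J) :
      ∀ᶠ p : X × ℂ in 𝓝 (x₀, z₀), p.2 ∈ J → DiffQuotExceeds (F p.1) J M δ p.2 :=
    (eventually_nhdsWithin_iff.1 ((hx₀ z₀ hz₀).eventually_nhdsWithin hF hz₀)).mono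
      fun _ hp hpJ => hp ⟨trivial, hpJ⟩
  exact (hJ.eventually_forall_of_forall_eventually
    (P := fun x z => z ∈ J → DiffQuotExceeds (F x) J M δ z) hlocal).mono
      fun _ hx z₀ hz₀ => hx z₀ hz₀ hz₀

theorem exists_mem_sphere_pow_eq_neg {z₀ : ℂ} (hz₀ : z₀ ∈ sphere 0 1) {N : ℕ} (hN : N ≠ 0) :
    ∃ z ∈ sphere (0 : ℂ) 1, z ^ N = -z₀ ^ N ∧ ‖z - z₀‖ ≤ Real.pi / N := by
  rw [mem_sphere_zero_iff_norm] at hz₀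
  refine ⟨z₀ * Complex.exp (Complex.I * (Real.pi / N : ℝ)), ?_, ?_, ?_⟩
  · rw [mem_sphere_zero_iff_norm, norm_mul, hz₀, Complex.norm_exp_I_mul_ofReal, one_mul]
  · have : (N : ℂ) * (Complex.I * (Real.pi / N : ℝ)) = Real.pi * Complex.I := by
      push_cast; field_simp
    rw [mul_pow, ← Complex.exp_nat_mul, this, Complex.exp_pi_mul_I, mul_neg_one]
  · calc ‖z₀ * Complex.exp (Complex.I * (Real.pi / N : ℝ)) - z₀‖
        = ‖Complex.exp (Complex.I * (Real.pi / N : ℝ)) - 1‖ := by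
          rw [← mul_sub_one, norm_mul, hz₀, one_mul]
      _ ≤ ‖Real.pi / N‖ := Real.norm_exp_I_mul_ofReal_sub_one_le
      _ = Real.pi / N := Real.norm_of_nonneg (by positivity)

theorem lt_norm_sub_add_mul_pow_of_pow_eq_neg {g : ℂ → ℂ} {c : ℝ} {N : ℕ} {z z₀ : ℂ}
    (hz₀ : z₀ ∈ sphere 0 1) (hzN : z ^ N = -z₀ ^ N) (hg : ‖g z - g z₀‖ < c) :
    c < ‖(g z + c * z ^ N) - (g z₀ + c * z₀ ^ N)‖ := by
  have hc : 0 ≤ c := (norm_nonneg _).trans hg.le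
  have hz₀N : ‖z₀ ^ N‖ = 1 := by rw [norm_pow, mem_sphere_zero_iff_norm.1 hz₀, one_pow]
  have hjump : ‖(c : ℂ) * (z ^ N - z₀ ^ N)‖ = 2 * c := by
    rw [hzN, show -z₀ ^ N - z₀ ^ N = -(2 * z₀ ^ N) by ring, norm_mul, norm_neg, norm_mul, hz₀N,
      Complex.norm_real, Real.norm_of_nonneg hc, Complex.norm_ofNat]
    ring
  calc c < ‖(c : ℂ) * (z ^ N - z₀ ^ N)‖ - ‖g z - g z₀‖ := by rw [hjump]; linarith
    _ ≤ ‖(c : ℂ) * (z ^ N - z₀ ^ N) + (g z - g z₀)‖ := norm_sub_le_norm_add _ _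
    _ = ‖(g z + c * z ^ N) - (g z₀ + c * z₀ ^ N)‖ := by ring_nf

theorem eventually_forall_diffQuotExceeds_add_mul_pow {g : ℂ → ℂ}
    (hg : ContinuousOn g (sphere 0 1)) {c M δ : ℝ} (hc : 0 < c) (hM : 0 ≤ M) (hδ : 0 < δ) :
    ∀ᶠ N : ℕ in atTop, ∀ z₀ ∈ sphere (0 : ℂ) 1,
      DiffQuotExceeds (fun z => g z + c * z ^ N) (sphere 0 1) M δ z₀ := by
  obtain ⟨η, hη, hg_unif⟩ := Metric.uniformContinuousOn_iff.1
    ((isCompact_sphere 0 1).uniformContinuousOn_of_continuous hg) c hc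
  have harc := tendsto_const_div_atTop_nhds_zero_nat Real.pi
  have hMarc : Tendsto (fun N : ℕ => M * (Real.pi / N)) atTop (𝓝 0) := by
    simpa using harc.const_mul M
  filter_upwards [eventually_ne_atTop 0, harc.eventually (gt_mem_nhds (lt_min hη hδ)),
    hMarc.eventually (gt_mem_nhds hc)] with N hN harcN hMarcN z₀ hz₀
  obtain ⟨z, hz, hzN, hzz₀⟩ := exists_mem_sphere_pow_eq_neg hz₀ hN
  have hg_close : ‖g z - g z₀‖ < c := by
    simpa only [dist_eq_norm] using hg_unif z hz z₀ hz₀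
      (by rw [dist_eq_norm]; exact hzz₀.trans_lt (harcN.trans_le (min_le_left _ _)))
  have hjump := lt_norm_sub_add_mul_pow_of_pow_eq_neg hz₀ hzN hg_close
  refine ⟨z, hz, norm_pos_iff.2 (sub_ne_zero.2 fun h => ?_),
    hzz₀.trans_lt (harcN.trans_le (min_le_right _ _)), ?_⟩
  · rw [h, sub_self, norm_zero] at hjump
    linarith
  · calc M * ‖z - z₀‖ ≤ M * (Real.pi / N) := by gcongr
      _ < c := hMarcN
      _ < _ := hjump

section extendFn

variable {E : Set ℂ}

theorem extendFn_of_mem (f : C(E, ℂ)) {z : ℂ} (hz : z ∈ E) : extendFn E f z = f ⟨z, hz⟩ :=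
  dif_pos hz

@[simp]
theorem extendFn_coe (f : C(E, ℂ)) (z : E) : extendFn E f z = f z :=
  extendFn_of_mem f z.2

theorem extendFn_comp_coe (f : C(E, ℂ)) : extendFn E f ∘ (↑) = f :=
  funext (extendFn_coe f)

theorem continuousOn_extendFn (f : C(E, ℂ)) : ContinuousOn (extendFn E f) E := by
  rw [continuousOn_iff_continuous_domRestrict, domRestrict_eq, extendFn_comp_coe]
  exact f.continuous

theorem continuousOn_extendFn_uncurry [CompactSpace E] :
    ContinuousOn (uncurry (extendFn E)) (univ ×ˢ E) := by
  rw [continuousOn_iff_continuous_domRestrict]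
  have : (univ ×ˢ E).domRestrict (uncurry (extendFn E)) = fun p => p.1.1 ⟨p.1.2, p.2.2⟩ :=
    funext fun p => extendFn_of_mem _ _
  rw [this]
  fun_prop

theorem extendFn_add_smul_pow (f : C(E, ℂ)) (c : ℂ) (N : ℕ) :
    EqOn (extendFn E (f + c • (ContinuousMap.id ℂ ^ N).restrict E))
      (fun z => extendFn E f z + c * z ^ N) E := fun z hz => by
  simp [extendFn_of_mem _ hz]

theorem isClosed_setOf_differentiableOn_extendFn [CompactSpace E] {U : Set ℂ} (hU : IsOpen U)
    (hUE : U ⊆ E) : IsClosed {f : C(E, ℂ) | DifferentiableOn ℂ (extendFn E f) U} := by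
  refine isClosed_of_closure_subset fun f hf => ?_
  have := mem_closure_iff_nhdsWithin_neBot.mp hf
  have hunif : TendstoUniformlyOn (fun g : C(E, ℂ) => extendFn E g) (extendFn E f)
      (𝓝[{f | DifferentiableOn ℂ (extendFn E f) U}] f) E := by
    rw [tendstoUniformlyOn_iff_tendstoUniformly_comp_coe, extendFn_comp_coe]
    simpa only [extendFn_coe, id] using
      (ContinuousMap.tendsto_iff_tendstoUniformly (f := f)).mp
        (tendsto_id.mono_left nhdsWithin_le_nhds)
  exact (hunif.mono hUE).tendstoLocallyUniformlyOn.differentiableOn self_mem_nhdsWithin hU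

end extendFn

theorem exists_dist_lt_forall_diffQuotExceeds {K U : Set ℂ} [CompactSpace K]
    (hK : K ⊆ closedBall 0 1) (hsphere : sphere 0 1 ⊆ K) (hUK : U ⊆ K) {f : C(K, ℂ)}
    (hf : DifferentiableOn ℂ (extendFn K f) U) {ε M δ : ℝ} (hε : 0 < ε) (hM : 0 ≤ M)
    (hδ : 0 < δ) :
    ∃ g : C(K, ℂ), DifferentiableOn ℂ (extendFn K g) U ∧ dist g f < ε ∧
      ∀ z₀ ∈ sphere (0 : ℂ) 1, DiffQuotExceeds (extendFn K g) (sphere 0 1) M δ z₀ := by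
  obtain ⟨N, hN⟩ := (eventually_forall_diffQuotExceeds_add_mul_pow
    ((continuousOn_extendFn f).mono hsphere) (half_pos hε) hM hδ).exists
  set p : C(K, ℂ) := (ContinuousMap.id ℂ ^ N).restrict K
  have hg := extendFn_add_smul_pow f ((ε / 2 : ℝ) : ℂ) N
  refine ⟨f + ((ε / 2 : ℝ) : ℂ) • p, (hf.add (by fun_prop)).congr fun z hz => hg (hUK hz), ?_,
    fun z₀ hz₀ => (hN z₀ hz₀).congr (fun z hz => (hg (hsphere hz)).symm) hz₀⟩
  have hp : ‖p‖ ≤ 1 := (ContinuousMap.norm_le _ zero_le_one).2 fun z => by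
    simpa [p] using pow_le_one₀ (norm_nonneg _) (mem_closedBall_zero_iff.1 (hK z.2))
  calc dist (f + ((ε / 2 : ℝ) : ℂ) • p) f = ε / 2 * ‖p‖ := by
        rw [dist_eq_norm, add_sub_cancel_left, norm_smul, Complex.norm_real,
          Real.norm_of_nonneg (by positivity)]
    _ ≤ ε / 2 := mul_le_of_le_one_right (by positivity) hp
    _ < ε := half_lt_self hε

/-- In the disc algebra `A(D)` (continuous functions on the closed unit disc, holomorphic on
the open unit disc, with the supremum norm — on the compact closed disc the compact-open
topology is the supremum-norm topology), the set of functions having infinite difference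
quotients at every point of the unit circle along the unit circle is a dense `Gδ` set. -/
theorem discAlgebra_genericity :
    let K : Set ℂ := Metric.closedBall 0 1
    let A : Set C(K, ℂ) := {f | DifferentiableOn ℂ (extendFn K f) (Metric.ball 0 1)}
    let S : Set ↥A := {f | ∀ z₀ ∈ Metric.sphere (0:ℂ) 1,
      HasInfDiffQuot (extendFn K f.1) (Metric.sphere 0 1) z₀}
    Dense S ∧ IsGδ S := by
  intro K A S
  have : CompactSpace K := isCompact_iff_compactSpace.mp (isCompact_closedBall 0 1)
  have : CompleteSpace A :=
    (isClosed_setOf_differentiableOn_extendFn isOpen_ball ball_subset_closedBall).completeSpace_coe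
  set G : ℕ → Set A := fun n => {f | ∀ z₀ ∈ sphere (0 : ℂ) 1,
    DiffQuotExceeds (extendFn K f.1) (sphere 0 1) (n + 1) (1 / (n + 1)) z₀}
  have hS : S = ⋂ n, G n := by
    ext f
    simp only [S, G, mem_iInter, mem_ofPred_eq, hasInfDiffQuot_iff_forall_nat]
    exact ⟨fun h n z₀ hz₀ => h z₀ hz₀ n, fun h z₀ hz₀ n => h n z₀ hz₀⟩
  have hG_open (n : ℕ) : IsOpen (G n) :=
    (isOpen_setOf_forall_diffQuotExceeds (isCompact_sphere 0 1)
      (continuousOn_extendFn_uncurry.mono (prod_mono subset_rfl sphere_subset_closedBall))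
      _ _).preimage continuous_subtype_val
  have hG_dense (n : ℕ) : Dense (G n) := by
    refine Metric.dense_iff.2 fun f ε hε => ?_
    obtain ⟨g, hgA, hgf, hgG⟩ := exists_dist_lt_forall_diffQuotExceeds subset_rfl
      sphere_subset_closedBall ball_subset_closedBall f.2 hε (by positivity) (by positivity)
        (M := n + 1) (δ := 1 / (n + 1))
    exact ⟨⟨g, hgA⟩, hgf, hgG⟩
  rw [hS]
  exact ⟨dense_iInter_of_isOpen hG_open hG_dense, IsGδ.iInter_of_isOpen hG_open⟩
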